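/- Let g be a holomorphic polynomial on the bidisk, homogeneous of some degree d ≥ 1, with ‖g‖∞ ≤ 1 on T², and set h = (1−g)/(1−\bar{g}) on T². Then P⁺₂h = 1 − ‖g‖₂² − g, and ‖P⁺₂h‖₄⁴ = 1 + ‖g‖₂⁸ + ‖g‖₄⁴ − 2‖g‖₂⁴. -/

import Mathlib

open MeasureTheory Real Filter
open scoped ENNReal Topology

/-- Normalized Haar measure on the `n`-torus `𝕋ⁿ`. -/
noncomputable def muN (n : ℕ) : Measure (Fin n → AddCircle (1:ℝ)) :=
  Measure.pi fun _ => AddCircle.haarAddCircle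

/-- The Fourier coefficient of `f : 𝕋ⁿ → ℂ` at the multi-index `α ∈ ℤⁿ`. -/
noncomputable def fourierCoeffN {n : ℕ} (f : (Fin n → AddCircle (1:ℝ)) → ℂ)
    (α : Fin n → ℤ) : ℂ :=
  ∫ z, (∏ i, fourier (-(α i)) (z i)) * f z ∂muN n

/-- `g` is the Riesz projection `P⁺ₙ f` of `f` on the `n`-torus: the Fourier coefficients of
`g` agree with those of `f` for multi-indices with all components nonnegative, and vanish
for all other multi-indices. -/
def IsRieszN {n : ℕ} (f g : (Fin n → AddCircle (1:ℝ)) → ℂ) : Prop :=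
  MemLp f 2 (muN n) ∧ MemLp g 2 (muN n) ∧
    (∀ α : Fin n → ℤ, (∀ i, 0 ≤ α i) → fourierCoeffN g α = fourierCoeffN f α) ∧
    (∀ α : Fin n → ℤ, (∃ i, α i < 0) → fourierCoeffN g α = 0)

/-- The critical exponent `pₙ = sup {p ≥ 2 : ‖P⁺ₙ‖_{∞,p} = 1}` of the Riesz projection
on the `n`-torus. -/
noncomputable def critExpN (n : ℕ) : ℝ :=
  sSup {p : ℝ | 2 ≤ p ∧ ∀ f g : (Fin n → AddCircle (1:ℝ)) → ℂ, IsRieszN f g →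
    eLpNorm g (ENNReal.ofReal p) (muN n) ≤ eLpNorm f ∞ (muN n)}

/-!
Everything is governed by the diagonal rotation `z ↦ z + (t, t)` of `𝕋²`, under which `g` picks
up the phase `e(d t)`: an integral of `χ_β · gʲ · ḡᵏ` over `𝕋²` vanishes unless
`β₁ + β₂ + (j - k) d = 0`. For `0 ≤ r < 1` expand `(1 - r ḡ)⁻¹` as a geometric series; at a
Fourier index `α ≥ 0` this selection rule kills every term of `(1 - g) ∑ rᵏ ḡᵏ` beyond `k = 1`,
and the `k = 1` term only contributes `-r ‖g‖₂²` at `α = 0`. Letting `r → 1` by dominated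
convergence (`|1 - g| ≤ 2 |1 - r ḡ|`) gives `P⁺h = 1 - ‖g‖₂² - g`. Finally, with
`A = 1 - ‖g‖₂²`, `‖A - g‖₄⁴ = ‖A² - 2A g + g²‖₂²`, and the three summands are orthogonal because
they are homogeneous of the distinct degrees `0, d, 2d`.
-/

local notation "𝕋" => AddCircle (1 : ℝ)

section Translation

variable {G : Type*} [AddGroup G] [MeasurableSpace G] [MeasurableAdd G] {μ : Measure G}
  [μ.IsAddRightInvariant] {f : G → ℂ}

theorem integral_eq_zero_of_map_add_eq_mul {c : G} {w : ℂ} (hf : ∀ z, f (z + c) = w * f z)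
    (hw : w ≠ 1) : ∫ z, f z ∂μ = 0 := by
  have hinv : ∫ z, f (z + c) ∂μ = ∫ z, f z ∂μ := integral_add_right_eq_self f c
  simp only [hf, integral_const_mul] at hinv
  by_contra h0
  exact hw (mul_right_cancel₀ h0 (by rw [hinv, one_mul]))

/-- Translating by `φ (1 / (2m))` multiplies `f` by `-1`. -/
theorem integral_eq_zero_of_map_add_eq_fourier_mul (φ : 𝕋 → G) {m : ℤ} (hm : m ≠ 0)
    (hf : ∀ t z, f (z + φ t) = fourier m t * f z) : ∫ z, f z ∂μ = 0 := by
  refine integral_eq_zero_of_map_add_eq_mul (hf ((1 / 2 / m : ℝ) : 𝕋)) ?_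
  have := fourier_add_half_inv_index hm one_pos (0 : 𝕋)
  rw [zero_add, fourier_eval_zero] at this
  rw [this]
  norm_num

end Translation

theorem fourier_add_arg (m : ℤ) (x y : 𝕋) : fourier m (x + y) = fourier m x * fourier m y := by
  simp only [fourier_apply, smul_add, AddCircle.toCircle_add, Circle.coe_mul]

theorem norm_one_sub_div_one_sub_conj_le_one (w : ℂ) : ‖(1 - w) / (1 - starRingEnd ℂ w)‖ ≤ 1 := by
  rw [norm_div, show 1 - starRingEnd ℂ w = starRingEnd ℂ (1 - w) by simp, RCLike.norm_conj]
  exact div_self_le_one _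

theorem memLp_one_sub_div_one_sub_conj {X : Type*} [MeasurableSpace X] {μ : Measure X}
    [IsFiniteMeasure μ] {g : X → ℂ} (hg : Measurable g) (p : ℝ≥0∞) :
    MemLp (fun x => (1 - g x) / (1 - starRingEnd ℂ (g x))) p μ :=
  MemLp.of_bound ((measurable_const.sub hg).div
      (measurable_const.sub (Complex.continuous_conj.measurable.comp hg))).aestronglyMeasurable
    1 (ae_of_all _ fun x => norm_one_sub_div_one_sub_conj_le_one (g x))

theorem toCircle_pow_eq_fourier (x : 𝕋) (k : ℕ) : (AddCircle.toCircle x : ℂ) ^ k = fourier k x := by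
  rw [fourier_apply, natCast_zsmul, AddCircle.toCircle_nsmul, Circle.coe_pow]

section AbelSummation

variable {X : Type*} [MeasurableSpace X] {μ : Measure X} {w q : X → ℂ}

theorem one_sub_le_norm_one_sub_mul {q : ℂ} (hq : ‖q‖ ≤ 1) {r : ℝ} (hr0 : 0 ≤ r) :
    1 - r ≤ ‖1 - r * q‖ := by
  have hrq : ‖(r : ℂ) * q‖ ≤ r := by
    rw [norm_mul, Complex.norm_real, Real.norm_of_nonneg hr0]
    exact mul_le_of_le_one_right hr0 hq
  have := norm_sub_norm_le (1 : ℂ) (r * q)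
  rw [norm_one] at this
  linarith

theorem norm_one_sub_le_two_mul_norm_one_sub_mul {q : ℂ} (hq : ‖q‖ ≤ 1) {r : ℝ} (hr0 : 0 ≤ r)
    (hr1 : r ≤ 1) : ‖1 - q‖ ≤ 2 * ‖1 - r * q‖ := by
  have hgap := one_sub_le_norm_one_sub_mul hq hr0
  have hsplit : ‖1 - q‖ ≤ ‖1 - r * q‖ + (1 - r) := by
    calc ‖1 - q‖ = ‖(1 - r * q) - ((1 - r : ℝ) : ℂ) * q‖ := by push_cast; ring_nf
      _ ≤ ‖1 - r * q‖ + ‖((1 - r : ℝ) : ℂ) * q‖ := norm_sub_le _ _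
      _ ≤ ‖1 - r * q‖ + (1 - r) := by
        rw [norm_mul, Complex.norm_real, Real.norm_of_nonneg (by linarith)]
        gcongr
        exact mul_le_of_le_one_right (by linarith) hq
  linarith

theorem hasSum_integral_mul_geometric (hw : Integrable w μ) (hq : AEStronglyMeasurable q μ)
    (hq1 : ∀ x, ‖q x‖ ≤ 1) {r : ℂ} (hr : ‖r‖ < 1) :
    HasSum (fun k => r ^ k * ∫ x, w x * q x ^ k ∂μ) (∫ x, w x * (1 - r * q x)⁻¹ ∂μ) := by
  have hrq : ∀ x, ‖r * q x‖ ≤ ‖r‖ := fun x => by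
    rw [norm_mul]; exact mul_le_of_le_one_right (norm_nonneg r) (hq1 x)
  have hbound : ∀ k x, ‖w x * (r * q x) ^ k‖ ≤ ‖r‖ ^ k * ‖w x‖ := fun k x => by
    rw [norm_mul, norm_pow, mul_comm]
    gcongr
    exact hrq x
  have hint : ∀ k : ℕ, Integrable (fun x => w x * (r * q x) ^ k) μ := fun k =>
    hw.mul_bdd ((aestronglyMeasurable_const.mul hq).pow k)
      (ae_of_all _ fun x => (norm_pow _ k).trans_le (pow_le_one₀ (norm_nonneg _)
        ((hrq x).trans hr.le)))
  have hsum : Summable fun k : ℕ => ∫ x, ‖w x * (r * q x) ^ k‖ ∂μ := by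
    refine Summable.of_nonneg_of_le (fun k => integral_nonneg fun x => norm_nonneg _)
      (fun k => ?_) ((summable_geometric_of_lt_one (norm_nonneg r) hr).mul_right (∫ x, ‖w x‖ ∂μ))
    rw [← integral_const_mul]
    exact integral_mono (hint k).norm (hw.norm.const_mul _) (hbound k)
  have h := hasSum_integral_of_summable_integral_norm hint hsum
  simp only [tsum_mul_left, tsum_geometric_of_norm_lt_one ((hrq _).trans_lt hr)] at h
  simpa only [mul_pow, mul_left_comm _ (r ^ _), integral_const_mul] using h

theorem tendsto_integral_mul_inv_one_sub_mul [IsFiniteMeasure μ] (hw : AEStronglyMeasurable w μ)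
    (hq : AEStronglyMeasurable q μ) (hq1 : ∀ x, ‖q x‖ ≤ 1) (hwq : ∀ x, ‖w x‖ ≤ ‖1 - q x‖) :
    Tendsto (fun r : ℝ => ∫ x, w x * (1 - r * q x)⁻¹ ∂μ) (𝓝[<] 1)
      (𝓝 (∫ x, w x / (1 - q x) ∂μ)) := by
  have hbound : ∀ r ∈ Set.Ioo (0 : ℝ) 1, ∀ x, ‖w x * (1 - r * q x)⁻¹‖ ≤ 2 := by
    rintro r ⟨hr0, hr1⟩ x
    have hgap : 0 < ‖1 - r * q x‖ :=
      (sub_pos.mpr hr1).trans_le (one_sub_le_norm_one_sub_mul (hq1 x) hr0.le)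
    rw [norm_mul, norm_inv, ← div_eq_mul_inv, div_le_iff₀ hgap]
    exact (hwq x).trans (norm_one_sub_le_two_mul_norm_one_sub_mul (hq1 x) hr0.le hr1.le)
  refine tendsto_integral_filter_of_dominated_convergence (fun _ => 2) ?_ ?_
    (integrable_const 2) (ae_of_all _ fun x => ?_)
  · exact Eventually.of_forall fun r =>
      hw.mul (aestronglyMeasurable_const.sub
        (aestronglyMeasurable_const.mul hq)).aemeasurable.inv.aestronglyMeasurable
  · filter_upwards [Ioo_mem_nhdsLT one_pos] with r hr
    exact ae_of_all _ (hbound r hr)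
  · by_cases hx : q x = 1
    · have : w x = 0 := by simpa [hx] using hwq x
      simp [this]
    · have hcont : ContinuousAt (fun r : ℝ => w x * (1 - r * q x)⁻¹) 1 := by
        refine continuousAt_const.mul ((continuousAt_const.sub
          (Complex.continuous_ofReal.continuousAt.mul continuousAt_const)).inv₀ ?_)
        simpa using sub_ne_zero.mpr (Ne.symm hx)
      simpa [div_eq_mul_inv] using hcont.tendsto.mono_left nhdsWithin_le_nhds

theorem integral_div_one_sub_eq_of_integral_mul_pow_eq_zero [IsFiniteMeasure μ]
    (hw : AEStronglyMeasurable w μ) (hq : AEStronglyMeasurable q μ) (hq1 : ∀ x, ‖q x‖ ≤ 1)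
    (hwq : ∀ x, ‖w x‖ ≤ ‖1 - q x‖) (hvanish : ∀ k, 2 ≤ k → ∫ x, w x * q x ^ k ∂μ = 0) :
    ∫ x, w x / (1 - q x) ∂μ = ∫ x, w x ∂μ + ∫ x, w x * q x ∂μ := by
  have hwi : Integrable w μ := Integrable.of_bound hw 2 <| ae_of_all _ fun x =>
    (hwq x).trans <| (norm_sub_le _ _).trans (by rw [norm_one]; linarith [hq1 x])
  have habel : ∀ r ∈ Set.Ioo (0 : ℝ) 1,
      ∫ x, w x * (1 - r * q x)⁻¹ ∂μ = ∫ x, w x ∂μ + r * ∫ x, w x * q x ∂μ := by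
    rintro r ⟨hr0, hr1⟩
    have hr : ‖(r : ℂ)‖ < 1 := by rwa [Complex.norm_real, Real.norm_of_nonneg hr0.le]
    have hfinite : HasSum _ _ := hasSum_sum_of_ne_finset_zero (s := Finset.range 2)
      (f := fun k => (r : ℂ) ^ k * ∫ x, w x * q x ^ k ∂μ) fun k hk => by
        rw [hvanish k (by simp at hk; omega), mul_zero]
    simpa [Finset.sum_range_succ] using (hasSum_integral_mul_geometric hwi hq hq1 hr).unique hfinite
  have hlim : Tendsto (fun r : ℝ => ∫ x, w x ∂μ + r * ∫ x, w x * q x ∂μ) (𝓝[<] 1)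
      (𝓝 (∫ x, w x ∂μ + ∫ x, w x * q x ∂μ)) := by
    have hr := (Complex.continuous_ofReal.tendsto 1).mono_left (nhdsWithin_le_nhds (s := Set.Iio 1))
    simpa using tendsto_const_nhds.add (hr.mul_const (∫ x, w x * q x ∂μ))
  refine tendsto_nhds_unique (tendsto_integral_mul_inv_one_sub_mul hw hq hq1 hwq) ?_
  refine hlim.congr' ?_
  filter_upwards [Ioo_mem_nhdsLT one_pos] with r hr
  exact (habel r hr).symm

end AbelSummation

theorem toReal_eLpNorm_pow_eq_integral_norm_pow {X E : Type*} [MeasurableSpace X] {μ : Measure X}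
    [NormedAddCommGroup E] {f : X → E} (hf : AEStronglyMeasurable f μ) {p : ℕ} (hp : p ≠ 0) :
    (eLpNorm f p μ).toReal ^ p = ∫ x, ‖f x‖ ^ p ∂μ := by
  rw [toReal_eLpNorm hf, lpNorm_eq_integral_norm_rpow_toReal (by simpa) (by simp) hf,
    ENNReal.toReal_natCast]
  simp only [Real.rpow_natCast]
  exact Real.rpow_inv_natCast_pow (integral_nonneg fun x => by positivity) hp

namespace Torus

variable {n : ℕ}

instance : IsProbabilityMeasure (muN n) := by unfold muN; infer_instance

instance : (muN n).IsAddRightInvariant := by unfold muN; infer_instance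

noncomputable def character (α : Fin n → ℤ) (z : Fin n → 𝕋) : ℂ := ∏ i, fourier (α i) (z i)

theorem fourierCoeffN_eq (f : (Fin n → 𝕋) → ℂ) (α : Fin n → ℤ) :
    fourierCoeffN f α = ∫ z, character (-α) z * f z ∂muN n := rfl

theorem character_add (α β : Fin n → ℤ) (z : Fin n → 𝕋) :
    character (α + β) z = character α z * character β z := by
  simp only [character, Pi.add_apply, fourier_add, Finset.prod_mul_distrib]

@[simp]
theorem character_zero (z : Fin n → 𝕋) : character 0 z = 1 := by
  simp [character]

theorem norm_character (α : Fin n → ℤ) (z : Fin n → 𝕋) : ‖character α z‖ = 1 := by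
  simp [character, norm_prod, fourier_apply, Circle.norm_coe]

@[fun_prop]
theorem continuous_character (α : Fin n → ℤ) : Continuous (character α) :=
  continuous_finsetProd _ fun i _ => (fourier (α i)).continuous.comp (continuous_apply i)

theorem character_add_single (α : Fin n → ℤ) (i : Fin n) (t : 𝕋) (z : Fin n → 𝕋) :
    character α (z + Pi.single i t) = fourier (α i) t * character α z := by
  have hshift : ∏ j, fourier (α j) ((Pi.single i t : Fin n → 𝕋) j) = fourier (α i) t := by
    rw [Fintype.prod_eq_single i fun j hj => by rw [Pi.single_apply, if_neg hj, fourier_eval_zero],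
      Pi.single_eq_same]
  simp only [character, Pi.add_apply, fourier_add_arg, Finset.prod_mul_distrib, hshift]
  ring

theorem integral_character (α : Fin n → ℤ) :
    ∫ z, character α z ∂muN n = if α = 0 then 1 else 0 := by
  split_ifs with hα
  · subst hα
    simp
  · obtain ⟨i, hi⟩ := Function.ne_iff.mp hα
    exact integral_eq_zero_of_map_add_eq_fourier_mul (f := character α) (fun t => Pi.single i t)
      hi (character_add_single α i)

/-- Homogeneity of degree `m` for the diagonal circle action: `f (e^{iθ} z) = e^{imθ} f z`. -/
def IsHomogeneous (m : ℤ) (f : (Fin n → 𝕋) → ℂ) : Prop :=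
  ∀ t z, f (z + fun _ => t) = fourier m t * f z

theorem isHomogeneous_const (c : ℂ) : IsHomogeneous (n := n) 0 fun _ => c := by
  intro t z
  rw [fourier_zero, one_mul]

theorem isHomogeneous_character (α : Fin n → ℤ) : IsHomogeneous (∑ i, α i) (character α) := by
  intro t z
  simp only [character, Pi.add_apply, fourier_add_arg, Finset.prod_mul_distrib]
  rw [mul_comm]
  congr 1
  induction (Finset.univ : Finset (Fin n)) using Finset.induction_on with
  | empty => simp
  | insert i s hi ih => rw [Finset.prod_insert hi, Finset.sum_insert hi, ih, fourier_add]

namespace IsHomogeneous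

variable {m m' : ℤ} {f f' : (Fin n → 𝕋) → ℂ}

theorem mul (hf : IsHomogeneous m f) (hf' : IsHomogeneous m' f') :
    IsHomogeneous (m + m') fun z => f z * f' z := by
  intro t z
  dsimp only
  rw [hf, hf', fourier_add]
  ring

theorem const_mul (hf : IsHomogeneous m f) (c : ℂ) : IsHomogeneous m fun z => c * f z := by
  simpa using (isHomogeneous_const c).mul hf

theorem pow (hf : IsHomogeneous m f) (k : ℕ) : IsHomogeneous (k * m) fun z => f z ^ k := by
  induction k with
  | zero => simpa using isHomogeneous_const (n := n) 1
  | succ k ih => simpa [pow_succ, add_mul] using ih.mul hf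

theorem conj (hf : IsHomogeneous m f) : IsHomogeneous (-m) fun z => starRingEnd ℂ (f z) := by
  intro t z
  dsimp only
  rw [hf, map_mul, fourier_neg]

theorem sum {ι : Type*} (s : Finset ι) {f : ι → (Fin n → 𝕋) → ℂ}
    (hf : ∀ i ∈ s, IsHomogeneous m (f i)) : IsHomogeneous m fun z => ∑ i ∈ s, f i z := by
  intro t z
  simp only [Finset.mul_sum]
  exact Finset.sum_congr rfl fun i hi => hf i hi t z

theorem integral_eq_zero (hf : IsHomogeneous m f) (hm : m ≠ 0) : ∫ z, f z ∂muN n = 0 :=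
  integral_eq_zero_of_map_add_eq_fourier_mul (fun t _ => t) hm hf

end IsHomogeneous

theorem integrable_of_continuous {f : (Fin n → 𝕋) → ℂ} (hf : Continuous f) :
    Integrable f (muN n) :=
  hf.integrable_of_hasCompactSupport (HasCompactSupport.of_compactSpace f)

theorem fourierCoeffN_const_sub (c : ℂ) {f : (Fin n → 𝕋) → ℂ} (hf : Integrable f (muN n))
    (α : Fin n → ℤ) :
    fourierCoeffN (fun z => c - f z) α = (if α = 0 then c else 0) - fourierCoeffN f α := by
  have hχ := integrable_of_continuous (continuous_character (-α))
  simp only [fourierCoeffN_eq, mul_sub]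
  rw [integral_sub (hχ.mul_const c) (hf.bdd_mul hχ.aestronglyMeasurable
    (ae_of_all _ fun z => (norm_character _ z).le)), integral_mul_const, integral_character]
  simp only [neg_eq_zero]
  split_ifs <;> simp

theorem fourierCoeffN_sum_character {ι : Type*} (s : Finset ι) (c : ι → ℂ)
    (β : ι → Fin n → ℤ) (α : Fin n → ℤ) :
    fourierCoeffN (fun z => ∑ k ∈ s, c k * character (β k) z) α
      = ∑ k ∈ s, if α = β k then c k else 0 := by
  simp only [fourierCoeffN_eq, Finset.mul_sum]
  rw [integral_finsetSum]
  · refine Finset.sum_congr rfl fun k _ => ?_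
    simp_rw [mul_left_comm _ (c k), ← character_add]
    rw [integral_const_mul, integral_character]
    simp only [neg_add_eq_zero]
    split_ifs <;> simp
  · exact fun k _ => integrable_of_continuous
      ((continuous_character _).mul (continuous_const.mul (continuous_character _)))

theorem integral_mul_conj_eq_zero {m m' : ℤ} {f f' : (Fin n → 𝕋) → ℂ} (hf : IsHomogeneous m f)
    (hf' : IsHomogeneous m' f') (hm : m ≠ m') :
    ∫ z, f z * starRingEnd ℂ (f' z) ∂muN n = 0 :=
  (hf.mul hf'.conj).integral_eq_zero (by rwa [← sub_eq_add_neg, sub_ne_zero])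

theorem integral_norm_sum_sq {ι : Type*} (s : Finset ι) {m : ι → ℤ}
    {f : ι → (Fin n → 𝕋) → ℂ} (hf : ∀ i ∈ s, IsHomogeneous (m i) (f i))
    (hfc : ∀ i ∈ s, Continuous (f i)) (hm : Set.InjOn m s) :
    ∫ z, ‖∑ i ∈ s, f i z‖ ^ 2 ∂muN n = ∑ i ∈ s, ∫ z, ‖f i z‖ ^ 2 ∂muN n := by
  have hint : ∀ i ∈ s, ∀ j ∈ s, Integrable (fun z => f i z * starRingEnd ℂ (f j z)) (muN n) :=
    fun i hi j hj => integrable_of_continuous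
      ((hfc i hi).mul (Complex.continuous_conj.comp (hfc j hj)))
  apply Complex.ofReal_injective
  simp_rw [Complex.ofReal_sum, ← integral_complex_ofReal, Complex.ofReal_pow,
    ← Complex.mul_conj', map_sum, Finset.sum_mul_sum]
  rw [integral_finsetSum _ fun i hi => integrable_finsetSum _ fun j hj => hint i hi j hj]
  refine Finset.sum_congr rfl fun i hi => ?_
  rw [integral_finsetSum _ fun j hj => hint i hi j hj]
  refine Finset.sum_eq_single_of_mem i hi fun j hj hji => ?_
  exact integral_mul_conj_eq_zero (hf i hi) (hf j hj) fun h => hji (hm hj hi h.symm)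

section Degree

variable {d : ℤ} {g : (Fin n → 𝕋) → ℂ}

theorem integral_norm_const_sub_pow_two_mul (hd : d ≠ 0) (hg : IsHomogeneous d g)
    (hgc : Continuous g) (A : ℂ) (N : ℕ) :
    ∫ z, ‖A - g z‖ ^ (2 * N) ∂muN n
      = ∑ i ∈ Finset.range (N + 1),
          (N.choose i : ℝ) ^ 2 * ‖A‖ ^ (2 * (N - i)) * ∫ z, ‖g z‖ ^ (2 * i) ∂muN n := by
  set c : ℕ → ℂ := fun i => N.choose i * A ^ (N - i) * (-1) ^ i
  have hexpand : ∀ z, ‖A - g z‖ ^ (2 * N) = ‖∑ i ∈ Finset.range (N + 1), c i * g z ^ i‖ ^ 2 := by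
    intro z
    rw [mul_comm, pow_mul, ← norm_pow, sub_eq_neg_add, add_pow]
    congr 2
    refine Finset.sum_congr rfl fun i _ => ?_
    rw [neg_pow]
    ring
  have hinj : Set.InjOn (fun i : ℕ => (i : ℤ) * d) (Finset.range (N + 1)) :=
    fun i _ j _ hij => by exact_mod_cast mul_right_cancel₀ hd hij
  rw [integral_congr_ae (ae_of_all _ hexpand),
    integral_norm_sum_sq _ (fun i _ => (hg.pow i).const_mul (c i))
      (fun i _ => continuous_const.mul (hgc.pow i)) hinj]
  refine Finset.sum_congr rfl fun i _ => ?_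
  simp only [c, norm_mul, norm_pow, norm_neg, norm_one, one_pow, mul_one, Complex.norm_natCast,
    mul_pow, ← pow_mul, integral_const_mul]
  ring_nf

theorem toReal_eLpNorm_const_sub_pow_four (hd : d ≠ 0) (hg : IsHomogeneous d g)
    (hgc : Continuous g) (A : ℂ) :
    (eLpNorm (fun z => A - g z) 4 (muN n)).toReal ^ 4
      = ‖A‖ ^ 4 + 4 * ‖A‖ ^ 2 * ∫ z, ‖g z‖ ^ 2 ∂muN n + ∫ z, ‖g z‖ ^ 4 ∂muN n := by
  rw [show (4 : ℝ≥0∞) = ((4 : ℕ) : ℝ≥0∞) by norm_num,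
    toReal_eLpNorm_pow_eq_integral_norm_pow (by fun_prop) (by norm_num),
    show 4 = 2 * 2 from rfl, integral_norm_const_sub_pow_two_mul hd hg hgc A 2]
  norm_num [Finset.sum_range_succ]

theorem integral_character_mul_pow_mul_conj_pow_eq_zero (hg : IsHomogeneous d g)
    (β : Fin n → ℤ) {j k : ℕ} (h : ∑ i, β i + j * d - k * d ≠ 0) :
    ∫ z, character β z * g z ^ j * starRingEnd ℂ (g z) ^ k ∂muN n = 0 :=
  (((isHomogeneous_character β).mul (hg.pow j)).mul (hg.conj.pow k)).integral_eq_zero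
    (by rwa [mul_neg, ← sub_eq_add_neg])

theorem fourierCoeffN_div_one_sub_conj (hd : 0 < d) (hg : IsHomogeneous d g)
    (hgc : Continuous g) (hg1 : ∀ z, ‖g z‖ ≤ 1) {α : Fin n → ℤ} (hα : ∀ i, 0 ≤ α i) :
    fourierCoeffN (fun z => (1 - g z) / (1 - starRingEnd ℂ (g z))) α
      = fourierCoeffN (fun z => 1 - g z) α
        - if α = 0 then ((∫ z, ‖g z‖ ^ 2 ∂muN n : ℝ) : ℂ) else 0 := by
  have hsum : ∑ i, (-α) i = -∑ i, α i := by simp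
  have hsum_nonneg : 0 ≤ ∑ i, α i := Finset.sum_nonneg fun i _ => hα i
  have hselect : ∀ j k : ℕ, 0 < ∑ i, α i + k * d - j * d →
      ∫ z, character (-α) z * g z ^ j * starRingEnd ℂ (g z) ^ k ∂muN n = 0 :=
    fun j k h => integral_character_mul_pow_mul_conj_pow_eq_zero hg (-α) (by rw [hsum]; omega)
  have hsplit : ∀ k : ℕ, ∫ z, character (-α) z * (1 - g z) * starRingEnd ℂ (g z) ^ k ∂muN n
      = ∫ z, character (-α) z * g z ^ 0 * starRingEnd ℂ (g z) ^ k ∂muN n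
        - ∫ z, character (-α) z * g z ^ 1 * starRingEnd ℂ (g z) ^ k ∂muN n := by
    intro k
    rw [← integral_sub]
    · simp only [pow_zero, pow_one, mul_one]
      congr 1 with z
      ring
    all_goals exact integrable_of_continuous (by fun_prop)
  have hq : Continuous fun z => starRingEnd ℂ (g z) := by fun_prop
  rw [fourierCoeffN_eq, fourierCoeffN_eq]
  simp_rw [mul_div_assoc']
  rw [integral_div_one_sub_eq_of_integral_mul_pow_eq_zero (by fun_prop : Continuous
      fun z => character (-α) z * (1 - g z)).aestronglyMeasurable hq.aestronglyMeasurable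
      (fun z => by rw [RCLike.norm_conj]; exact hg1 z) ?_ ?_]
  · have hcross := hsplit 1
    rw [hselect 0 1 (by omega), zero_sub] at hcross
    simp only [pow_one] at hcross
    rw [hcross, sub_eq_add_neg]
    congr 2
    split_ifs with h0
    · subst h0
      simp_rw [neg_zero, character_zero, one_mul, Complex.mul_conj', ← Complex.ofReal_pow]
      exact integral_complex_ofReal
    · obtain ⟨i, hi⟩ := Function.ne_iff.mp h0
      have hpos : 0 < ∑ i, α i :=
        Finset.sum_pos' (fun i _ => hα i) ⟨i, Finset.mem_univ i, lt_of_le_of_ne (hα i) hi.symm⟩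
      simpa using hselect 1 1 (by omega)
  · intro z
    rw [norm_mul, norm_character, one_mul, ← RCLike.norm_conj, map_sub, map_one]
  · intro k hk
    have hk2 : (2 : ℤ) ≤ k := by exact_mod_cast hk
    rw [hsplit k, hselect 0 k (by push_cast; nlinarith), hselect 1 k (by push_cast; nlinarith),
      sub_zero]

theorem isRieszN_div_one_sub_conj (hd : 0 < d) (hg : IsHomogeneous d g) (hgc : Continuous g)
    (hg1 : ∀ z, ‖g z‖ ≤ 1) (hspec : ∀ α : Fin n → ℤ, (∃ i, α i < 0) → fourierCoeffN g α = 0) :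
    IsRieszN (fun z => (1 - g z) / (1 - starRingEnd ℂ (g z)))
      (fun z => 1 - ((∫ w, ‖g w‖ ^ 2 ∂muN n : ℝ) : ℂ) - g z) := by
  have hgi : Integrable g (muN n) := integrable_of_continuous hgc
  have hcoeff := fourierCoeffN_const_sub (1 - ((∫ w, ‖g w‖ ^ 2 ∂muN n : ℝ) : ℂ)) hgi
  refine ⟨memLp_one_sub_div_one_sub_conj hgc.measurable 2,
    (continuous_const.sub hgc).memLp_of_hasCompactSupport (HasCompactSupport.of_compactSpace _),
    fun α hα => ?_, fun α hα => ?_⟩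
  · rw [hcoeff, fourierCoeffN_div_one_sub_conj hd hg hgc hg1 hα, fourierCoeffN_const_sub 1 hgi]
    split_ifs <;> ring
  · obtain ⟨i, hi⟩ := hα
    rw [hcoeff, if_neg (by rintro rfl; simp at hi), hspec α ⟨i, hi⟩, sub_zero]

end Degree

noncomputable def homogeneousPoly (d : ℕ) (c : ℕ → ℂ) (z : Fin 2 → 𝕋) : ℂ :=
  ∑ k ∈ Finset.range (d + 1),
    c k * (AddCircle.toCircle (z 0) : ℂ) ^ k * (AddCircle.toCircle (z 1) : ℂ) ^ (d - k)

variable {d : ℕ} {c : ℕ → ℂ}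

theorem homogeneousPoly_eq_sum_character :
    homogeneousPoly d c
      = fun z => ∑ k ∈ Finset.range (d + 1), c k * character ![(k : ℤ), (d - k : ℕ)] z := by
  ext z
  simp [homogeneousPoly, mul_assoc, toCircle_pow_eq_fourier, character, Fin.prod_univ_two]

theorem continuous_homogeneousPoly : Continuous (homogeneousPoly d c) := by
  rw [homogeneousPoly_eq_sum_character]
  fun_prop

theorem isHomogeneous_homogeneousPoly : IsHomogeneous d (homogeneousPoly d c) := by
  rw [homogeneousPoly_eq_sum_character]
  refine IsHomogeneous.sum _ fun k hk => ?_
  have hdeg : ∑ i, ![(k : ℤ), (d - k : ℕ)] i = d := by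
    have := Finset.mem_range.mp hk
    simp only [Fin.sum_univ_two, Matrix.cons_val_zero, Matrix.cons_val_one, Matrix.cons_val_fin_one]
    omega
  exact hdeg ▸ (isHomogeneous_character _).const_mul (c k)

theorem fourierCoeffN_homogeneousPoly_eq_zero {α : Fin 2 → ℤ} (hα : ∃ i, α i < 0) :
    fourierCoeffN (homogeneousPoly d c) α = 0 := by
  rw [homogeneousPoly_eq_sum_character, fourierCoeffN_sum_character]
  refine Finset.sum_eq_zero fun k _ => if_neg ?_
  rintro rfl
  obtain ⟨i, hi⟩ := hα
  fin_cases i <;>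
    simp only [Fin.zero_eta, Fin.mk_one, Matrix.cons_val_zero, Matrix.cons_val_one,
      Matrix.cons_val_fin_one] at hi <;> omega

end Torus

open Torus

/-- Let `g` be a holomorphic polynomial on the bidisk, homogeneous of degree `d ≥ 1`
(with coefficients `c 0, ..., c d`), with `‖g‖_∞ ≤ 1` on `𝕋²`, and let
`h = (1-g)/(1-conj g)`. Then `P⁺₂h = 1 - ‖g‖₂² - g` and
`‖P⁺₂h‖₄⁴ = 1 + ‖g‖₂⁸ + ‖g‖₄⁴ - 2‖g‖₂⁴`. -/
theorem riesz_of_homogeneous_quotient (d : ℕ) (hd : 1 ≤ d) (c : ℕ → ℂ)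
    (g : (Fin 2 → AddCircle (1:ℝ)) → ℂ)
    (hg : ∀ z, g z = ∑ k ∈ Finset.range (d + 1),
      c k * (AddCircle.toCircle (z 0) : ℂ) ^ k * (AddCircle.toCircle (z 1) : ℂ) ^ (d - k))
    (hsup : ∀ z, ‖g z‖ ≤ 1)
    (h : (Fin 2 → AddCircle (1:ℝ)) → ℂ)
    (hh : ∀ z, h z = (1 - g z) / (1 - starRingEnd ℂ (g z))) :
    IsRieszN h (fun z => 1 - ((∫ w, ‖g w‖ ^ 2 ∂muN 2 : ℝ) : ℂ) - g z) ∧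
    (eLpNorm (fun z => 1 - ((∫ w, ‖g w‖ ^ 2 ∂muN 2 : ℝ) : ℂ) - g z) 4 (muN 2)).toReal ^ 4 =
      1 + (∫ w, ‖g w‖ ^ 2 ∂muN 2) ^ 4 + (∫ w, ‖g w‖ ^ 4 ∂muN 2)
        - 2 * (∫ w, ‖g w‖ ^ 2 ∂muN 2) ^ 2 := by
  have hg' : g = homogeneousPoly d c := funext hg
  have hgc : Continuous g := hg' ▸ continuous_homogeneousPoly
  have hgd : IsHomogeneous d g := hg' ▸ isHomogeneous_homogeneousPoly
  obtain rfl : h = fun z => (1 - g z) / (1 - starRingEnd ℂ (g z)) := funext hh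
  refine ⟨isRieszN_div_one_sub_conj (by omega) hgd hgc hsup
    fun α hα => hg' ▸ fourierCoeffN_homogeneousPoly_eq_zero hα, ?_⟩
  set a : ℝ := ∫ w, ‖g w‖ ^ 2 ∂muN 2
  have hnorm : ‖1 - (a : ℂ)‖ = |1 - a| := by
    rw [← Complex.ofReal_one, ← Complex.ofReal_sub, Complex.norm_real, Real.norm_eq_abs]
  rw [toReal_eLpNorm_const_sub_pow_four (by omega) hgd hgc, hnorm, (by decide : Even 4).pow_abs,
    sq_abs]
  ring
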